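/- arXiv:1508.00072 — 7 statements merged into one kernel-verified Lean document; each statement's English description precedes it below -/
import Mathlib

section
/- Let S : V → W and T : V → Z be linear transformations with ker S = ker T and dim(W/range S) ≤ dim(Z/range T). Then there exists an injective linear transformation P : W → Z such that T = P ∘ S. -/
universe u

theorem aux_inj {D M N : Type u} [DivisionRing D] [AddCommGroup M] [Module D M]
    [AddCommGroup N] [Module D N] (h : Module.rank D M ≤ Module.rank D N) :
    ∃ g : M →ₗ[D] N, Function.Injective g := by
  let b := Module.Basis.ofVectorSpace D M
  let c := Module.Basis.ofVectorSpace D N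
  have hle : Cardinal.mk (Module.Basis.ofVectorSpaceIndex D M) ≤
      Cardinal.mk (Module.Basis.ofVectorSpaceIndex D N) := by
    rw [b.mk_eq_rank'', c.mk_eq_rank'']; exact h
  obtain ⟨e⟩ := hle
  refine ⟨c.repr.symm.toLinearMap ∘ₗ (Finsupp.lmapDomain D D e) ∘ₗ b.repr.toLinearMap, ?_⟩
  exact c.repr.symm.injective.comp ((Finsupp.mapDomain_injective e.injective).comp b.repr.injective)

theorem stmt_1 {D V W Z : Type u} [DivisionRing D]
    [AddCommGroup V] [Module D V] [AddCommGroup W] [Module D W]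
    [AddCommGroup Z] [Module D Z]
    (S : V →ₗ[D] W) (T : V →ₗ[D] Z)
    (hker : LinearMap.ker S = LinearMap.ker T)
    (hcoker : Module.rank D (W ⧸ LinearMap.range S) ≤
      Module.rank D (Z ⧸ LinearMap.range T)) :
    ∃ P : W →ₗ[D] Z, Function.Injective P ∧ T = P.comp S := by
  obtain ⟨C, hC⟩ := Submodule.exists_isCompl (LinearMap.range S)
  obtain ⟨C', hC'⟩ := Submodule.exists_isCompl (LinearMap.range T)
  -- the map on range S
  set Tbar : (V ⧸ LinearMap.ker S) →ₗ[D] Z := (LinearMap.ker S).liftQ T hker.le with hTbar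
  have hTbarInj : Function.Injective Tbar := by
    rw [← LinearMap.ker_eq_bot]
    exact Submodule.ker_liftQ_eq_bot _ _ _ hker.ge
  set f : (LinearMap.range S) →ₗ[D] Z :=
    Tbar ∘ₗ (LinearMap.quotKerEquivRange S).symm.toLinearMap with hf
  have hfInj : Function.Injective f :=
    hTbarInj.comp (LinearMap.quotKerEquivRange S).symm.injective
  have hfS : ∀ v : V, f ⟨S v, LinearMap.mem_range_self S v⟩ = T v := by
    intro v
    simp only [hf, LinearMap.comp_apply, LinearEquiv.coe_coe]
    rw [LinearMap.quotKerEquivRange_symm_apply_image]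
    simp [hTbar]
  have hfrange : ∀ x, f x ∈ LinearMap.range T := by
    rintro ⟨_, v, rfl⟩
    rw [hfS v]
    exact LinearMap.mem_range_self T v
  -- the map on the complement
  have hrankC : Module.rank D C ≤ Module.rank D C' := by
    have e1 := (Submodule.quotientEquivOfIsCompl _ C hC).rank_eq
    have e2 := (Submodule.quotientEquivOfIsCompl _ C' hC').rank_eq
    rw [← e1, ← e2]; exact hcoker
  obtain ⟨g, hgInj⟩ := aux_inj hrankC
  set projR := (LinearMap.range S).linearProjOfIsCompl C hC with hprojR
  set projC := C.linearProjOfIsCompl (LinearMap.range S) hC.symm with hprojC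
  refine ⟨f ∘ₗ projR + C'.subtype ∘ₗ g ∘ₗ projC, ?_, ?_⟩
  · rw [← LinearMap.ker_eq_bot, LinearMap.ker_eq_bot']
    intro w hw
    simp only [LinearMap.add_apply, LinearMap.comp_apply, Submodule.coe_subtype] at hw
    have h1 : f (projR w) ∈ LinearMap.range T := hfrange _
    have h2 : f (projR w) = -(g (projC w) : Z) := by
      rw [eq_neg_iff_add_eq_zero]; exact hw
    have h3 : f (projR w) ∈ C' := h2 ▸ neg_mem (g (projC w)).2
    have h4 : f (projR w) = 0 := by
      have := hC'.disjoint.le_bot ⟨h1, h3⟩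
      simpa using this
    have h5 : projR w = 0 := hfInj (by rw [h4, map_zero])
    have h6 : g (projC w) = 0 := by
      have : (g (projC w) : Z) = 0 := by rw [← neg_eq_zero, ← h2, h4]
      exact Subtype.ext this
    have h7 : projC w = 0 := hgInj (by rw [h6, map_zero])
    have : (projR w : W) + (projC w : W) = w := Submodule.projection_add_projection_eq_self hC w
    rw [← this, h5, h7]
    simp
  · ext v
    simp only [LinearMap.comp_apply, LinearMap.add_apply, Submodule.coe_subtype]
    have h1 : projR (S v) = ⟨S v, LinearMap.mem_range_self S v⟩ :=
      Submodule.linearProjOfIsCompl_apply_left hC ⟨S v, LinearMap.mem_range_self S v⟩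
    have h2 : projC (S v) = 0 :=
      Submodule.projectionOnto_apply_of_mem_right hC.symm (LinearMap.mem_range_self S v)
    rw [h1, h2, hfS]
    simp
end

section
/- Let S₁, …, Sₙ : V → W and T : V → Z be linear transformations. Then ⋂_{i=1}^n ker Sᵢ ⊆ ker T if and only if there exist linear transformations P₁, …, Pₙ : W → Z such that T = P₁∘S₁ + ⋯ + Pₙ∘Sₙ. -/
/-!
The family `S` is the single map `pi S : V → (Fin n → W)` with kernel `⨅ i, ker (S i)`,
and linear maps out of `Fin n → W` are exactly the sums `∑ i, P i ∘ proj i`. So the claim is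
that `T` factors through `pi S` iff `ker (pi S) ≤ ker T`, which holds over a division ring
because the injection `V ⧸ ker (pi S) → (Fin n → W)` has a left inverse.
-/

namespace LinearMap

section DivisionRing

variable {K V V' V'' : Type*} [DivisionRing K] [AddCommGroup V] [Module K V]
  [AddCommGroup V'] [Module K V'] [AddCommGroup V''] [Module K V'']

theorem exists_comp_eq_iff_ker_le (f : V →ₗ[K] V') (g : V →ₗ[K] V'') :
    (∃ h : V' →ₗ[K] V'', h ∘ₗ f = g) ↔ ker f ≤ ker g := by
  refine ⟨fun ⟨h, hg⟩ => hg ▸ ker_le_ker_comp f h, fun hle => ?_⟩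
  obtain ⟨l, hl⟩ := ((ker f).liftQ f le_rfl).exists_leftInverse_of_injective
    ((ker f).ker_liftQ_eq_bot f le_rfl le_rfl)
  refine ⟨(ker f).liftQ g hle ∘ₗ l, ?_⟩
  ext v
  have hlv : l (f v) = Submodule.Quotient.mk v := LinearMap.congr_fun hl (Submodule.Quotient.mk v)
  simp only [comp_apply, hlv, Submodule.liftQ_apply]

end DivisionRing

theorem sum_comp_eq_lsum_comp_pi {R V W Z ι : Type*} [Semiring R] [AddCommMonoid V]
    [Module R V] [AddCommMonoid W] [Module R W] [AddCommMonoid Z] [Module R Z]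
    [Fintype ι] [DecidableEq ι] (P : ι → W →ₗ[R] Z) (S : ι → V →ₗ[R] W) :
    ∑ i, P i ∘ₗ S i = lsum R (fun _ => W) ℕ P ∘ₗ pi S := by
  ext v
  simp

end LinearMap

open LinearMap in
theorem stmt_2_general {D V W Z : Type*} [DivisionRing D]
    [AddCommGroup V] [Module D V] [AddCommGroup W] [Module D W]
    [AddCommGroup Z] [Module D Z]
    (n : ℕ) (S : Fin n → (V →ₗ[D] W)) (T : V →ₗ[D] Z) :
    (⨅ i, LinearMap.ker (S i)) ≤ LinearMap.ker T ↔
      ∃ P : Fin n → (W →ₗ[D] Z), T = ∑ i, (P i).comp (S i) := by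
  rw [← ker_pi, ← exists_comp_eq_iff_ker_le, (lsum D (fun _ => W) ℕ).surjective.exists]
  simp only [sum_comp_eq_lsum_comp_pi, eq_comm]

theorem stmt_2 {D V W Z : Type*} [DivisionRing D]
    [AddCommGroup V] [Module D V] [AddCommGroup W] [Module D W]
    [AddCommGroup Z] [Module D Z]
    (n : ℕ) (hn : 0 < n) (S : Fin n → (V →ₗ[D] W)) (T : V →ₗ[D] Z) :
    (⨅ i, LinearMap.ker (S i)) ≤ LinearMap.ker T ↔
      ∃ P : Fin n → (W →ₗ[D] Z), T = ∑ i, (P i).comp (S i) :=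
  stmt_2_general n S T
end

section
/- Let S : V → W and T : Z → W be linear transformations with range S = range T and dim(ker S) ≤ dim(ker T). Then there exists a surjective linear transformation P : Z → V such that T = S ∘ P. -/
universe u

theorem aux_exists_surjective {D M N : Type u} [DivisionRing D] [AddCommGroup M] [Module D M]
    [AddCommGroup N] [Module D N] (h : Module.rank D N ≤ Module.rank D M) :
    ∃ f : M →ₗ[D] N, Function.Surjective f := by
  obtain ⟨sM, ⟨bM⟩⟩ := Module.Basis.exists_basis D M
  obtain ⟨sN, ⟨bN⟩⟩ := Module.Basis.exists_basis D N
  have hcard : Cardinal.mk sN ≤ Cardinal.mk sM := by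
    rwa [bN.mk_eq_rank'', bM.mk_eq_rank'']
  obtain ⟨e⟩ := hcard
  classical
  set g : sM → N := fun i => if hj : ∃ j, e j = i then bN hj.choose else 0 with hg
  refine ⟨bM.constr ℕ g, ?_⟩
  rw [← LinearMap.range_eq_top, ← top_le_iff, ← bN.span_eq, Submodule.span_le]
  rintro _ ⟨j, rfl⟩
  refine ⟨bM (e j), ?_⟩
  rw [Module.Basis.constr_basis]
  have hj : ∃ j', e j' = e j := ⟨j, rfl⟩
  show (if hj : ∃ j', e j' = e j then bN hj.choose else 0) = bN j
  rw [dif_pos hj]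
  congr 1
  exact e.injective hj.choose_spec

theorem stmt_4 {D V W Z : Type u} [DivisionRing D]
    [AddCommGroup V] [Module D V] [AddCommGroup W] [Module D W]
    [AddCommGroup Z] [Module D Z]
    (S : V →ₗ[D] W) (T : Z →ₗ[D] W)
    (hrange : LinearMap.range S = LinearMap.range T)
    (hker : Module.rank D (LinearMap.ker S) ≤ Module.rank D (LinearMap.ker T)) :
    ∃ P : Z →ₗ[D] V, Function.Surjective P ∧ T = S.comp P := by
  obtain ⟨q, hq⟩ := Submodule.exists_isCompl (LinearMap.ker T)
  obtain ⟨p, hp⟩ := Submodule.exists_isCompl (LinearMap.ker S)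
  obtain ⟨k, hk⟩ := aux_exists_surjective (D := D) (M := LinearMap.ker T)
    (N := LinearMap.ker S) hker
  -- the equivalence q ≃ p compatible with S and T
  let ψ : q ≃ₗ[D] p :=
    ((Submodule.quotientEquivOfIsCompl _ q hq).symm.trans
      (T.quotKerEquivRange)).trans
      (((LinearEquiv.ofEq _ _ hrange.symm).trans
        (S.quotKerEquivRange).symm).trans
        (Submodule.quotientEquivOfIsCompl _ p hp))
  have key : ∀ x : q, S ((ψ x : p) : V) = T (x : Z) := by
    intro x
    have h1 : (Submodule.Quotient.mk ((ψ x : V)) : V ⧸ LinearMap.ker S) =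
        (S.quotKerEquivRange).symm ⟨T (x : Z), hrange ▸ LinearMap.mem_range_self T (x : Z)⟩ := by
      simp [ψ, Submodule.quotientEquivOfIsCompl_symm_apply, LinearEquiv.coe_ofEq_apply,
          Subtype.ext_iff, LinearMap.quotKerEquivRange_apply_mk,
          Submodule.mk_quotientEquivOfIsCompl_apply]
    have h2 := congrArg (S.quotKerEquivRange) h1
    rw [LinearEquiv.apply_symm_apply] at h2
    have := congrArg (Subtype.val) h2
    simpa [LinearMap.quotKerEquivRange_apply_mk] using this
  let πq : Z →ₗ[D] q := q.linearProjOfIsCompl (LinearMap.ker T) hq.symm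
  let πk : Z →ₗ[D] (LinearMap.ker T) := (LinearMap.ker T).linearProjOfIsCompl q hq
  let P : Z →ₗ[D] V := p.subtype ∘ₗ (ψ : q →ₗ[D] p) ∘ₗ πq
    + (LinearMap.ker S).subtype ∘ₗ k ∘ₗ πk
  have hPapply : ∀ z, P z = (ψ (πq z) : V) + (k (πk z) : V) := fun z => rfl
  have hsurj : Function.Surjective P := by
    rw [← LinearMap.range_eq_top, ← top_le_iff]
    rw [← hp.sup_eq_top]
    refine sup_le ?_ ?_
    · rintro v hv
      obtain ⟨z, hz⟩ := hk ⟨v, hv⟩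
      refine ⟨(z : Z), ?_⟩
      rw [hPapply]
      have h1 : πq (z : Z) = 0 :=
        Submodule.projectionOnto_apply_of_mem_right hq.symm z.2
      have h2 : πk (z : Z) = z :=
        Submodule.linearProjOfIsCompl_apply_left hq z
      rw [h1, h2, hz]
      simp
    · rintro v hv
      obtain ⟨x, hx⟩ := ψ.surjective ⟨v, hv⟩
      refine ⟨(x : Z), ?_⟩
      rw [hPapply]
      have h1 : πq (x : Z) = x :=
        Submodule.linearProjOfIsCompl_apply_left hq.symm x
      have h2 : πk (x : Z) = 0 :=
        Submodule.projectionOnto_apply_of_mem_right hq x.2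
      rw [h1, h2, hx]
      simp
  refine ⟨P, hsurj, ?_⟩
  ext z
  have hdecomp : ((πk z : Z)) + ((πq z : Z)) = z :=
    Submodule.projection_add_projection_eq_self hq z
  have hTz : T z = T (πq z) := by
    conv_lhs => rw [← hdecomp]
    rw [map_add, (πk z).2]
    simp
  have : S (P z) = T (πq z) := by
    rw [hPapply, map_add, key, (k (πk z)).2, add_zero]
  simp only [LinearMap.comp_apply]
  rw [this, hTz]
end

section
/- Let S : V → W and T₁, …, Tₙ : Z → W be linear transformations. Then range S ⊆ span of ⋃_{i=1}^n range Tᵢ if and only if there exist linear transformations P₁, …, Pₙ : V → Z such that S = T₁∘P₁ + ⋯ + Tₙ∘Pₙ. -/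
/-!
Over a division ring every module is free, hence projective, so a map `S` whose range lies in the
range of `T : (Fin n → Z) → W`, `T x = ∑ i, Tᵢ (x i)`, lifts through `T`; the components of the
lift are the `Pᵢ`. The range of this `T` is exactly the span of the ranges of the `Tᵢ`.
-/

namespace LinearMap

variable {R M N P : Type*} [Semiring R] [AddCommMonoid M] [Module R M]
  [AddCommMonoid N] [Module R N] [AddCommMonoid P] [Module R P]

theorem range_le_range_iff_exists_comp_eq [Module.Projective R P]
    (f : M →ₗ[R] N) (g : P →ₗ[R] N) : range g ≤ range f ↔ ∃ h : P →ₗ[R] M, f ∘ₗ h = g := by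
  constructor
  · intro hle
    obtain ⟨h, hh⟩ := Module.projective_lifting_property f.rangeRestrict
      (g.codRestrict (range f) fun x => hle (mem_range_self g x)) f.surjective_rangeRestrict
    exact ⟨h, ext fun x => congrArg Subtype.val (LinearMap.congr_fun hh x)⟩
  · rintro ⟨h, rfl⟩
    exact range_comp_le_range h f

variable {ι : Type*} [Fintype ι] [DecidableEq ι] {φ : ι → Type*} [∀ i, AddCommMonoid (φ i)] [∀ i, Module R (φ i)]

theorem range_lsum (f : (i : ι) → φ i →ₗ[R] M) : range (lsum R φ ℕ f) = ⨆ i, range (f i) := by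
  apply le_antisymm
  · rintro _ ⟨x, rfl⟩
    simp only [lsum_apply, sum_apply, comp_apply, proj_apply]
    exact Submodule.sum_mem _ fun i _ => Submodule.mem_iSup_of_mem i (mem_range_self (f i) (x i))
  · refine iSup_le fun i => ?_
    rintro _ ⟨z, rfl⟩
    exact ⟨Pi.single i z, lsum_piSingle R φ ℕ f i z⟩

theorem lsum_comp_pi (f : (i : ι) → φ i →ₗ[R] M) (g : (i : ι) → N →ₗ[R] φ i) :
    lsum R φ ℕ f ∘ₗ pi g = ∑ i, f i ∘ₗ g i := by
  ext x
  simp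

end LinearMap

open LinearMap in
theorem stmt_5_general {D V W Z : Type*} [DivisionRing D]
    [AddCommGroup V] [Module D V] [AddCommGroup W] [Module D W]
    [AddCommGroup Z] [Module D Z]
    (n : ℕ) (S : V →ₗ[D] W) (T : Fin n → (Z →ₗ[D] W)) :
    LinearMap.range S ≤ (⨆ i, LinearMap.range (T i)) ↔
      ∃ P : Fin n → (V →ₗ[D] Z), S = ∑ i, (T i).comp (P i) := by
  rw [← range_lsum, range_le_range_iff_exists_comp_eq]
  constructor
  · rintro ⟨Q, hQ⟩
    exact ⟨fun i => proj i ∘ₗ Q, by rw [← hQ, ← lsum_comp_pi, pi_proj_comp]⟩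
  · rintro ⟨P, rfl⟩
    exact ⟨pi P, lsum_comp_pi T P⟩

theorem stmt_5 {D V W Z : Type*} [DivisionRing D]
    [AddCommGroup V] [Module D V] [AddCommGroup W] [Module D W]
    [AddCommGroup Z] [Module D Z]
    (n : ℕ) (hn : 0 < n) (S : V →ₗ[D] W) (T : Fin n → (Z →ₗ[D] W)) :
    LinearMap.range S ≤ (⨆ i, LinearMap.range (T i)) ↔
      ∃ P : Fin n → (V →ₗ[D] Z), S = ∑ i, (T i).comp (P i) :=
  stmt_5_general n S T
end

section
/- Let M be a finite-dimensional subspace of the dual space V' with dim W ≥ dim M. Then there exists a linear transformation T : V → W whose adjoint T' : W' → V' has range exactly M. -/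
universe u

variable {D V W : Type u} [DivisionRing D]
  [AddCommGroup V] [Module D V] [AddCommGroup W] [Module D W]

/-- The adjoint (algebraic transpose) of a linear map, as a linear map between
the (right, i.e. `Dᵐᵒᵖ`-) dual spaces. -/
def adjoint (T : V →ₗ[D] W) : (W →ₗ[D] D) →ₗ[Dᵐᵒᵖ] (V →ₗ[D] D) where
  toFun f := f.comp T
  map_add' f g := by ext x; simp
  map_smul' c f := by ext x; simp

/-- The annihilator of a subspace `K ⊆ V` inside the dual space `V' = V →ₗ[D] D`. -/
def annih (K : Submodule D V) : Submodule Dᵐᵒᵖ (V →ₗ[D] D) where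
  carrier := {f | ∀ x ∈ K, f x = 0}
  add_mem' := by intro f g hf hg x hx; simp [hf x hx, hg x hx]
  zero_mem' := by intro x hx; rfl
  smul_mem' := by intro c f hf x hx; simp [hf x hx]

/-!
Take a basis `f₁, …, fₙ` of `M` and, using `n ≤ dim W`, an injective `S : Dⁿ → W`; put
`T = S ∘ (f₁, …, fₙ)`. Functionals on a subspace extend to the whole space, so `S'` is
surjective and `range T' = range (f₁, …, fₙ)'`, which is spanned by the `fᵢ = T'(prᵢ)`.
-/

open Function Submodule

section Comp

variable {U : Type u} [AddCommGroup U] [Module D U]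

theorem adjoint_comp (S : W →ₗ[D] U) (T : V →ₗ[D] W) :
    adjoint (S ∘ₗ T) = adjoint T ∘ₗ adjoint S :=
  rfl

theorem adjoint_surjective_of_injective {S : W →ₗ[D] U} (hS : Injective S) :
    Surjective (adjoint S) := by
  obtain ⟨R, hRS⟩ := S.exists_leftInverse_of_injective (LinearMap.ker_eq_bot.mpr hS)
  refine fun f ↦ ⟨f ∘ₗ R, ?_⟩
  change f ∘ₗ R ∘ₗ S = f
  rw [hRS, LinearMap.comp_id]

theorem range_adjoint_comp_of_injective {S : W →ₗ[D] U} (hS : Injective S) (T : V →ₗ[D] W) :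
    LinearMap.range (adjoint (S ∘ₗ T)) = LinearMap.range (adjoint T) := by
  rw [adjoint_comp]
  exact LinearMap.range_comp_of_range_eq_top _
    (LinearMap.range_eq_top.mpr (adjoint_surjective_of_injective hS))

end Comp

theorem adjoint_pi_apply {ι : Type u} [Fintype ι] [DecidableEq ι] (f : ι → V →ₗ[D] D)
    (g : (ι → D) →ₗ[D] D) :
    adjoint (LinearMap.pi f) g = ∑ i, MulOpposite.op (g (Pi.single i 1)) • f i := by
  ext v
  change g (LinearMap.pi f v) = _
  rw [pi_eq_sum_univ' (LinearMap.pi f v)]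
  simp

theorem range_adjoint_pi {ι : Type u} [Finite ι] (f : ι → V →ₗ[D] D) :
    LinearMap.range (adjoint (LinearMap.pi f)) = span Dᵐᵒᵖ (Set.range f) := by
  classical
  cases nonempty_fintype ι
  apply le_antisymm
  · rintro _ ⟨g, rfl⟩
    rw [adjoint_pi_apply]
    exact sum_mem fun i _ ↦ smul_mem _ _ (subset_span ⟨i, rfl⟩)
  · rw [span_le]
    rintro _ ⟨i, rfl⟩
    exact ⟨LinearMap.proj i, rfl⟩

theorem stmt_15 (M : Submodule Dᵐᵒᵖ (V →ₗ[D] D)) [FiniteDimensional Dᵐᵒᵖ M]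
    (hdim : Module.rank Dᵐᵒᵖ M ≤ Module.rank D W) :
    ∃ T : V →ₗ[D] W, LinearMap.range (adjoint (D := D) T) = M := by
  let b := Module.Basis.ofVectorSpace Dᵐᵒᵖ M
  cases nonempty_fintype (Module.Basis.ofVectorSpaceIndex Dᵐᵒᵖ M)
  have hrank :
      Module.rank D (Module.Basis.ofVectorSpaceIndex Dᵐᵒᵖ M → D) ≤ Module.rank D W := by
    rwa [rank_fun', ← Cardinal.mk_fintype, b.mk_eq_rank'']
  obtain ⟨S, hS⟩ := rank_le_iff_exists_linearMap.mp hrank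
  have hspan : span Dᵐᵒᵖ (Set.range fun i ↦ (b i : V →ₗ[D] D)) = M :=
    (span_range_subtype_eq_top_iff M fun i ↦ (b i).2).mp b.span_eq
  refine ⟨S ∘ₗ LinearMap.pi fun i ↦ b i, ?_⟩
  rw [range_adjoint_comp_of_injective hS, range_adjoint_pi, hspan]
end

section
/- Let S : V → W and T : X → Y be linear transformations. Then rank S ≤ rank T (as cardinals) if and only if there exist linear transformations P : Y → W and Q : V → X such that S = P ∘ T ∘ Q. -/
universe u

theorem stmt_16 {D V W X Y : Type u} [DivisionRing D]
    [AddCommGroup V] [Module D V] [AddCommGroup W] [Module D W]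
    [AddCommGroup X] [Module D X] [AddCommGroup Y] [Module D Y]
    (S : V →ₗ[D] W) (T : X →ₗ[D] Y) :
    Module.rank D (LinearMap.range S) ≤ Module.rank D (LinearMap.range T) ↔
      ∃ (P : Y →ₗ[D] W) (Q : V →ₗ[D] X), S = (P.comp T).comp Q := by
  constructor
  · intro h
    -- bases of the ranges
    let b := Module.Basis.ofVectorSpace D (LinearMap.range S)
    let c := Module.Basis.ofVectorSpace D (LinearMap.range T)
    have hcard : Cardinal.mk (Module.Basis.ofVectorSpaceIndex D (LinearMap.range S)) ≤
        Cardinal.mk (Module.Basis.ofVectorSpaceIndex D (LinearMap.range T)) := by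
      rwa [b.mk_eq_rank'', c.mk_eq_rank'']
    obtain ⟨f⟩ := Cardinal.le_def _ _ |>.mp hcard
    -- choose preimages under T
    have hx : ∀ i, ∃ x : X, T x = (c (f i) : Y) := fun i => (c (f i)).2
    choose x hxT using hx
    let Q' : (LinearMap.range S) →ₗ[D] X := b.constr ℕ x
    let Q : V →ₗ[D] X := Q'.comp S.rangeRestrict
    obtain ⟨K, hK⟩ := Submodule.exists_isCompl (LinearMap.range T)
    let π : Y →ₗ[D] (LinearMap.range T) := (LinearMap.range T).linearProjOfIsCompl K hK
    let g : Module.Basis.ofVectorSpaceIndex D (LinearMap.range T) → W :=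
      Function.extend f (fun i => (b i : W)) (fun _ => 0)
    let P : Y →ₗ[D] W := (c.constr ℕ g).comp π
    refine ⟨P, Q, ?_⟩
    have key : (P.comp T).comp Q' = (LinearMap.range S).subtype := by
      apply b.ext
      intro i
      simp only [LinearMap.comp_apply, Submodule.subtype_apply, Q', P,
        Module.Basis.constr_basis]
      rw [hxT]
      have hmem : (c (f i) : Y) ∈ LinearMap.range T := (c (f i)).2
      have : π (c (f i) : Y) = c (f i) := by
        exact Submodule.linearProjOfIsCompl_apply_left hK (c (f i))
      rw [this, Module.Basis.constr_basis]
      simp [g, f.injective.extend_apply]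
    ext v
    have := congrArg (fun φ => φ (S.rangeRestrict v)) key
    simpa [Q, LinearMap.comp_apply] using this.symm
  · rintro ⟨P, Q, rfl⟩
    calc Module.rank D (LinearMap.range ((P.comp T).comp Q))
        ≤ Module.rank D (LinearMap.range (P.comp T)) := LinearMap.rank_comp_le_left _ _
      _ ≤ Module.rank D (LinearMap.range T) := LinearMap.rank_comp_le_right _ _
end

section
/- Let S : V → W and T₁, …, Tₙ : X → Y be linear transformations with rank S ≤ rank T₁ + ⋯ + rank Tₙ (as cardinals). Then there exist linear transformations Pᵢ : Y → W and Qᵢ : V → X (1 ≤ i ≤ n) such that S = Σ_{i=1}^n Pᵢ ∘ Tᵢ ∘ Qᵢ. -/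
/-!
Place the `Tᵢ` side by side as the block-diagonal map `⊕ Tᵢ : Xⁿ → Yⁿ`, whose range
`∏ range Tᵢ` has rank `Σ rank Tᵢ`. Over a division ring every injective linear map has a left
inverse and every surjective one a right inverse, so a map `S` with `rank S ≤ rank T` factors
as `P ∘ T ∘ Q`: embed `range S` into `range T`, lift along `T`, and come back by a left inverse
of the embedding composed with a projection of `Y` onto `range T`. The components of `P` and `Q`
along `Yⁿ` and `Xⁿ` then give `S = Σ Pᵢ Tᵢ Qᵢ`.
-/

universe u

open Module LinearMap

theorem rank_pi_fin {R : Type*} [Semiring R] [StrongRankCondition R] :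
    ∀ {n : ℕ} (M : Fin n → Type*) [∀ i, AddCommMonoid (M i)] [∀ i, Module R (M i)]
      [∀ i, Module.Free R (M i)], Module.rank R (Π i, M i) = ∑ i, Module.rank R (M i)
  | 0, _, _, _, _ => by
    have := nontrivial_of_invariantBasisNumber R
    rw [rank_subsingleton', Fin.sum_univ_zero]
  | n + 1, M, _, _, _ => by
    rw [← (Fin.consLinearEquiv R M).rank_eq, rank_prod', rank_pi_fin, Fin.sum_univ_succ]

namespace LinearMap

theorem piMap_eq_sum {R ι : Type*} [Semiring R] [Fintype ι] [DecidableEq ι]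
    {M N : ι → Type*} [∀ i, AddCommMonoid (M i)] [∀ i, Module R (M i)]
    [∀ i, AddCommMonoid (N i)] [∀ i, Module R (N i)] (T : ∀ i, M i →ₗ[R] N i) :
    piMap T = ∑ i, single R N i ∘ₗ T i ∘ₗ proj i := by
  ext x i
  simp

variable {K : Type*} [DivisionRing K]

theorem rank_range_piMap {n : ℕ} {M N : Fin n → Type*}
    [∀ i, AddCommGroup (M i)] [∀ i, Module K (M i)]
    [∀ i, AddCommGroup (N i)] [∀ i, Module K (N i)] (T : ∀ i, M i →ₗ[K] N i) :
    Module.rank K (range (piMap T)) = ∑ i, Module.rank K (range (T i)) := by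
  have hfactor : piMap T =
      (piMap fun i => (range (T i)).subtype) ∘ₗ piMap fun i => (T i).rangeRestrict := rfl
  have hsurj : Function.Surjective (piMap fun i => (T i).rangeRestrict) :=
    Function.Surjective.piMap fun i => (T i).surjective_rangeRestrict
  have hinj : Function.Injective (piMap fun i => (range (T i)).subtype) :=
    Function.Injective.piMap fun i => Subtype.val_injective
  rw [hfactor, range_comp_of_range_eq_top _ (range_eq_top.2 hsurj),
    rank_range_of_injective _ hinj, rank_pi_fin]

theorem exists_eq_comp_comp_of_rank_range_le {V X : Type*} {W Y : Type u}
    [AddCommGroup V] [Module K V] [AddCommGroup W] [Module K W]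
    [AddCommGroup X] [Module K X] [AddCommGroup Y] [Module K Y]
    (S : V →ₗ[K] W) (T : X →ₗ[K] Y)
    (h : Module.rank K (range S) ≤ Module.rank K (range T)) :
    ∃ (P : Y →ₗ[K] W) (Q : V →ₗ[K] X), S = P ∘ₗ T ∘ₗ Q := by
  obtain ⟨j, hj⟩ := rank_le_iff_exists_linearMap.mp h
  obtain ⟨r, hr⟩ := j.exists_leftInverse_of_injective (ker_eq_bot.2 hj)
  obtain ⟨s, hs⟩ := T.rangeRestrict.exists_rightInverse_of_surjective T.range_rangeRestrict
  obtain ⟨p, hp⟩ := (range T).subtype.exists_leftInverse_of_injective (Submodule.ker_subtype _)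
  refine ⟨(range S).subtype ∘ₗ r ∘ₗ p, s ∘ₗ j ∘ₗ S.rangeRestrict, ?_⟩
  have hT : ∀ z, T (s z) = z := fun z => congrArg Subtype.val (DFunLike.congr_fun hs z)
  have hp' : ∀ z : range T, p z = z := DFunLike.congr_fun hp
  have hr' : ∀ z, r (j z) = z := DFunLike.congr_fun hr
  ext v
  simp [hT, hp', hr']

end LinearMap

theorem stmt_17 {D V W X Y : Type u} [DivisionRing D]
    [AddCommGroup V] [Module D V] [AddCommGroup W] [Module D W]
    [AddCommGroup X] [Module D X] [AddCommGroup Y] [Module D Y]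
    (n : ℕ) (S : V →ₗ[D] W) (T : Fin n → (X →ₗ[D] Y))
    (h : Module.rank D (LinearMap.range S) ≤
      ∑ i, Module.rank D (LinearMap.range (T i))) :
    ∃ (P : Fin n → (Y →ₗ[D] W)) (Q : Fin n → (V →ₗ[D] X)),
      S = ∑ i, ((P i).comp (T i)).comp (Q i) := by
  obtain ⟨P, Q, hPQ⟩ := exists_eq_comp_comp_of_rank_range_le S (piMap T)
    (h.trans_eq (rank_range_piMap T).symm)
  refine ⟨fun i => P ∘ₗ single D (fun _ => Y) i, fun i => proj i ∘ₗ Q, ?_⟩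
  rw [hPQ, piMap_eq_sum]
  ext v
  simp only [comp_apply, LinearMap.sum_apply, map_sum]
end
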